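/- Let L be a Lie algebra over a field k and R : L → L a linear map satisfying [R(x),R(y)] = R([R(x),y] + [x,R(y)] + [x,y]) for all x,y ∈ L (a Rota–Baxter operator of weight 1). Then L equipped with the original bracket [,] and the product x·y := [R(x),y] is a post-Lie algebra: the identities (x·y)·z − x·(y·z) − (y·x)·z + y·(x·z) = [y,x]·z and x·[y,z] = [x·y,z] + [y,x·z] hold for all x,y,z ∈ L. -/

import Mathlib

section RotaBaxter

variable {L F : Type*} [LieRing L] [FunLike F L L] [AddMonoidHomClass F L L] {R : F}

theorem rotaBaxter_weight_one_sub_swap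
    (hRB : ∀ x y : L, ⁅R x, R y⁆ = R (⁅R x, y⁆ + ⁅x, R y⁆ + ⁅x, y⁆)) (x y : L) :
    R ⁅R x, y⁆ - R ⁅R y, x⁆ = ⁅R x, R y⁆ + R ⁅y, x⁆ := by
  rw [hRB, ← lie_skew (R y) x, ← lie_skew y x, map_add, map_add, map_neg, map_neg]
  abel

/-- The first post-Lie axiom for `x · y = ⁅R x, y⁆`: the Jacobi identity cancels the term
`⁅⁅R x, R y⁆, z⁆` produced by the Rota–Baxter identity. -/
theorem rotaBaxter_weight_one_postLie_assoc
    (hRB : ∀ x y : L, ⁅R x, R y⁆ = R (⁅R x, y⁆ + ⁅x, R y⁆ + ⁅x, y⁆)) (x y z : L) :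
    ⁅R ⁅R x, y⁆, z⁆ - ⁅R x, ⁅R y, z⁆⁆ - ⁅R ⁅R y, x⁆, z⁆ + ⁅R y, ⁅R x, z⁆⁆
      = ⁅R ⁅y, x⁆, z⁆ := by
  have hsub : ⁅R ⁅R x, y⁆, z⁆ - ⁅R ⁅R y, x⁆, z⁆ = ⁅⁅R x, R y⁆, z⁆ + ⁅R ⁅y, x⁆, z⁆ := by
    rw [← sub_lie, rotaBaxter_weight_one_sub_swap hRB, add_lie]
  rw [lie_lie] at hsub
  linear_combination (norm := abel) hsub

end RotaBaxter

/-- A Rota–Baxter operator of weight 1 on a Lie algebra induces a post-Lie structure with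
`x·y = [R x, y]` and the original bracket. -/
theorem rb_weight_one_gives_postLie {k : Type*} [Field k] {L : Type*} [LieRing L]
    [LieAlgebra k L] (R : L →ₗ[k] L)
    (hRB : ∀ x y : L, ⁅R x, R y⁆ = R (⁅R x, y⁆ + ⁅x, R y⁆ + ⁅x, y⁆)) :
    (∀ x y z : L,
      ⁅R ⁅R x, y⁆, z⁆ - ⁅R x, ⁅R y, z⁆⁆ - ⁅R ⁅R y, x⁆, z⁆ + ⁅R y, ⁅R x, z⁆⁆
        = ⁅R ⁅y, x⁆, z⁆) ∧
    (∀ x y z : L, ⁅R x, ⁅y, z⁆⁆ = ⁅⁅R x, y⁆, z⁆ + ⁅y, ⁅R x, z⁆⁆) :=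
  ⟨rotaBaxter_weight_one_postLie_assoc hRB, fun x _ _ => leibniz_lie (R x) _ _⟩
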